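/- arXiv:1808.00425 — 3 statements merged into one kernel-verified Lean document; each statement's English description precedes it below -/
import Mathlib

section
/- Let L be a finite set of strings in {0,1}^T such that every two distinct elements σ ≠ σ' in L satisfy Pr_{S}[f_S = σ|_S = σ'|_S] ≤ δ, and every σ in L satisfies Pr_S[f_S = σ|_S] ≥ ε/2, where δ < ε²/8. Then |L| ≤ 8/ε. -/
open Finset

private lemma key_ie {T Ω : Type*} [Fintype T] [Fintype Ω] [DecidableEq T]
    [DecidableEq (T → Bool)]
    (p : Ω → ℝ) (hp : ∀ ω, 0 ≤ p ω) (hp1 : ∑ ω, p ω = 1)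
    (S : Ω → Finset T) (f : Ω → T → Bool) (M : Finset (T → Bool)) :
    2 * ∑ σ ∈ M, ∑ ω ∈ univ.filter (fun ω => ∀ i ∈ S ω, f ω i = σ i), p ω ≤
    2 + ∑ σ ∈ M, ∑ σ' ∈ M.erase σ, ∑ ω ∈ univ.filter (fun ω =>
        (∀ i ∈ S ω, f ω i = σ i) ∧ (∀ i ∈ S ω, f ω i = σ' i)), p ω := by
  classical
  set N : Ω → ℕ := fun ω => (M.filter (fun σ => ∀ i ∈ S ω, f ω i = σ i)).card with hN
  set ind : (T → Bool) → Ω → ℝ :=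
    fun σ ω => if ∀ i ∈ S ω, f ω i = σ i then 1 else 0 with hind
  have hind_sq : ∀ σ ω, ind σ ω * ind σ ω = ind σ ω := by
    intro σ ω
    simp only [hind]
    split_ifs <;> ring
  have hsum_ind : ∀ ω, ∑ σ ∈ M, ind σ ω = (N ω : ℝ) := by
    intro ω
    simp [hind, hN, Finset.sum_boole]
  have h1 : ∑ σ ∈ M, ∑ ω ∈ univ.filter (fun ω => ∀ i ∈ S ω, f ω i = σ i), p ω
      = ∑ ω, (N ω : ℝ) * p ω := by
    simp_rw [Finset.sum_filter]
    rw [Finset.sum_comm]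
    refine Finset.sum_congr rfl fun ω _ => ?_
    have : ∑ σ ∈ M, (if ∀ i ∈ S ω, f ω i = σ i then p ω else 0)
        = ∑ σ ∈ M, ind σ ω * p ω := by
      refine Finset.sum_congr rfl fun σ _ => ?_
      simp only [hind]
      split_ifs <;> ring
    rw [this, ← Finset.sum_mul, hsum_ind]
  have h2 : ∑ σ ∈ M, ∑ σ' ∈ M.erase σ, ∑ ω ∈ univ.filter (fun ω =>
        (∀ i ∈ S ω, f ω i = σ i) ∧ (∀ i ∈ S ω, f ω i = σ' i)), p ω
      = ∑ ω, ((N ω : ℝ) * ((N ω : ℝ) - 1)) * p ω := by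
    have step : ∀ σ ∈ M, ∀ σ', ∑ ω ∈ univ.filter (fun ω =>
        (∀ i ∈ S ω, f ω i = σ i) ∧ (∀ i ∈ S ω, f ω i = σ' i)), p ω
        = ∑ ω, ind σ ω * ind σ' ω * p ω := by
      intro σ _ σ'
      rw [Finset.sum_filter]
      refine Finset.sum_congr rfl fun ω _ => ?_
      simp only [hind, ite_and]
      split_ifs <;> ring
    calc ∑ σ ∈ M, ∑ σ' ∈ M.erase σ, ∑ ω ∈ univ.filter (fun ω =>
            (∀ i ∈ S ω, f ω i = σ i) ∧ (∀ i ∈ S ω, f ω i = σ' i)), p ω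
        = ∑ σ ∈ M, ∑ σ' ∈ M.erase σ, ∑ ω, ind σ ω * ind σ' ω * p ω := by
          refine Finset.sum_congr rfl fun σ hσ => Finset.sum_congr rfl fun σ' _ => ?_
          exact step σ hσ σ'
      _ = ∑ ω, ∑ σ ∈ M, ∑ σ' ∈ M.erase σ, ind σ ω * ind σ' ω * p ω := by
          rw [Finset.sum_comm]
          refine Finset.sum_congr rfl fun σ _ => Finset.sum_comm
      _ = ∑ ω, ((N ω : ℝ) * ((N ω : ℝ) - 1)) * p ω := by
          refine Finset.sum_congr rfl fun ω _ => ?_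
          have inner : ∀ σ ∈ M, ∑ σ' ∈ M.erase σ, ind σ ω * ind σ' ω * p ω
              = ind σ ω * ((N ω : ℝ) - ind σ ω) * p ω := by
            intro σ hσ
            have : ∑ σ' ∈ M.erase σ, ind σ ω * ind σ' ω * p ω
                = ind σ ω * (∑ σ' ∈ M.erase σ, ind σ' ω) * p ω := by
              rw [Finset.mul_sum, Finset.sum_mul]
            rw [this, Finset.sum_erase_eq_sub hσ, hsum_ind]
          rw [Finset.sum_congr rfl inner]
          have : ∑ σ ∈ M, ind σ ω * ((N ω : ℝ) - ind σ ω) * p ω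
              = (∑ σ ∈ M, (ind σ ω * (N ω : ℝ) - ind σ ω)) * p ω := by
            rw [Finset.sum_mul]
            refine Finset.sum_congr rfl fun σ _ => ?_
            have hs := hind_sq σ ω
            calc ind σ ω * ((N ω : ℝ) - ind σ ω) * p ω
                = (ind σ ω * (N ω : ℝ) - ind σ ω * ind σ ω) * p ω := by ring
              _ = (ind σ ω * (N ω : ℝ) - ind σ ω) * p ω := by rw [hs]
          rw [this, Finset.sum_sub_distrib, ← Finset.sum_mul, hsum_ind]
          ring
  rw [h1, h2]
  have hpt : ∀ ω, 2 * ((N ω : ℝ) * p ω) ≤ (2 + (N ω : ℝ) * ((N ω : ℝ) - 1)) * p ω := by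
    intro ω
    have hn : 2 * (N ω : ℝ) ≤ 2 + (N ω : ℝ) * ((N ω : ℝ) - 1) := by
      rcases Nat.lt_or_ge (N ω) 2 with h | h
      · interval_cases h : (N ω) <;> simp [h] <;> norm_num
      · have : (2 : ℝ) ≤ (N ω : ℝ) := by exact_mod_cast h
        nlinarith
    nlinarith [hp ω, mul_le_mul_of_nonneg_right hn (hp ω)]
  calc 2 * ∑ ω, (N ω : ℝ) * p ω = ∑ ω, 2 * ((N ω : ℝ) * p ω) := by rw [Finset.mul_sum]
    _ ≤ ∑ ω, (2 + (N ω : ℝ) * ((N ω : ℝ) - 1)) * p ω := Finset.sum_le_sum fun ω _ => hpt ω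
    _ = 2 * ∑ ω, p ω + ∑ ω, ((N ω : ℝ) * ((N ω : ℝ) - 1)) * p ω := by
        rw [Finset.mul_sum, ← Finset.sum_add_distrib]
        refine Finset.sum_congr rfl fun ω _ => by ring
    _ = 2 + ∑ ω, ((N ω : ℝ) * ((N ω : ℝ) - 1)) * p ω := by rw [hp1]; ring

/-- If every two distinct σ ≠ σ' in L have joint agreement probability ≤ δ and every
σ ∈ L has agreement probability ≥ ε/2, with δ < ε²/8, then |L| ≤ 8/ε. -/
theorem stmt3 {T Ω : Type*} [Fintype T] [Fintype Ω] [DecidableEq T] [DecidableEq (T → Bool)]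
    (p : Ω → ℝ) (hp : ∀ ω, 0 ≤ p ω) (hp1 : ∑ ω, p ω = 1)
    (S : Ω → Finset T) (f : Ω → T → Bool)
    (L : Finset (T → Bool)) (ε δ : ℝ)
    (hε : 0 < ε) (hδ : 0 < δ) (hδε : δ < ε ^ 2 / 8)
    (hpair : ∀ σ ∈ L, ∀ σ' ∈ L, σ ≠ σ' →
      ∑ ω ∈ univ.filter (fun ω =>
        (∀ i ∈ S ω, f ω i = σ i) ∧ (∀ i ∈ S ω, f ω i = σ' i)), p ω ≤ δ)
    (hbig : ∀ σ ∈ L,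
      ε / 2 ≤ ∑ ω ∈ univ.filter (fun ω => ∀ i ∈ S ω, f ω i = σ i), p ω) :
    (L.card : ℝ) ≤ 8 / ε := by
  classical
  by_contra hcon
  push_neg at hcon
  have hLpos : 0 < L.card := by
    by_contra h
    push_neg at h
    have : L.card = 0 := by omega
    rw [this] at hcon
    simp at hcon
    have : (0:ℝ) < 8 / ε := by positivity
    linarith
  -- ε ≤ 2
  obtain ⟨σ₀, hσ₀⟩ := Finset.card_pos.mp hLpos
  have hε2 : ε ≤ 2 := by
    have h1 : ∑ ω ∈ univ.filter (fun ω => ∀ i ∈ S ω, f ω i = σ₀ i), p ω ≤ ∑ ω, p ω :=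
      Finset.sum_le_sum_of_subset_of_nonneg (Finset.filter_subset _ _)
        (fun ω _ _ => hp ω)
    have := hbig σ₀ hσ₀
    rw [hp1] at h1
    linarith
  set m : ℕ := ⌈(4 : ℝ) / ε⌉₊ with hm
  have hm1 : (4 : ℝ) / ε ≤ m := Nat.le_ceil _
  have hm2 : (m : ℝ) < 4 / ε + 1 := Nat.ceil_lt_add_one (by positivity)
  have h4e : (2 : ℝ) ≤ 4 / ε := by
    rw [le_div_iff₀ hε]; linarith
  have hm_ge2 : (2 : ℝ) ≤ (m : ℝ) := le_trans h4e hm1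
  have hmL : m ≤ L.card := by
    have h8 : (4 : ℝ) / ε + 1 ≤ 8 / ε := by
      have : (1 : ℝ) ≤ 4 / ε := by linarith
      have : (4:ℝ)/ε + 4/ε = 8/ε := by ring
      linarith
    have : (m : ℝ) < (L.card : ℝ) := by linarith
    exact_mod_cast this.le
  obtain ⟨M, hML, hMcard⟩ := Finset.exists_subset_card_eq hmL
  have key := key_ie p hp hp1 S f M
  -- lower bound LHS
  have hlow : (m : ℝ) * ε ≤ 2 * ∑ σ ∈ M, ∑ ω ∈ univ.filter
      (fun ω => ∀ i ∈ S ω, f ω i = σ i), p ω := by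
    have : ∑ σ ∈ M, (ε / 2) ≤ ∑ σ ∈ M, ∑ ω ∈ univ.filter
        (fun ω => ∀ i ∈ S ω, f ω i = σ i), p ω :=
      Finset.sum_le_sum fun σ hσ => hbig σ (hML hσ)
    rw [Finset.sum_const, hMcard, nsmul_eq_mul] at this
    linarith
  -- upper bound pair sum
  have hup : ∑ σ ∈ M, ∑ σ' ∈ M.erase σ, ∑ ω ∈ univ.filter (fun ω =>
        (∀ i ∈ S ω, f ω i = σ i) ∧ (∀ i ∈ S ω, f ω i = σ' i)), p ω
      ≤ (m : ℝ) * ((m : ℝ) - 1) * δ := by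
    have hbound : ∀ σ ∈ M, ∑ σ' ∈ M.erase σ, ∑ ω ∈ univ.filter (fun ω =>
          (∀ i ∈ S ω, f ω i = σ i) ∧ (∀ i ∈ S ω, f ω i = σ' i)), p ω
        ≤ ((m : ℝ) - 1) * δ := by
      intro σ hσ
      have : ∀ σ' ∈ M.erase σ, ∑ ω ∈ univ.filter (fun ω =>
            (∀ i ∈ S ω, f ω i = σ i) ∧ (∀ i ∈ S ω, f ω i = σ' i)), p ω ≤ δ := by
        intro σ' hσ'
        exact hpair σ (hML hσ) σ' (hML (Finset.mem_of_mem_erase hσ'))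
          (Ne.symm (Finset.ne_of_mem_erase hσ'))
      calc ∑ σ' ∈ M.erase σ, ∑ ω ∈ univ.filter (fun ω =>
            (∀ i ∈ S ω, f ω i = σ i) ∧ (∀ i ∈ S ω, f ω i = σ' i)), p ω
          ≤ ∑ _σ' ∈ M.erase σ, δ := Finset.sum_le_sum this
        _ = ((M.erase σ).card : ℝ) * δ := by rw [Finset.sum_const, nsmul_eq_mul]
        _ = ((m : ℝ) - 1) * δ := by
            rw [Finset.card_erase_of_mem hσ, hMcard]
            have : (1:ℕ) ≤ m := by exact_mod_cast (by linarith : (1:ℝ) ≤ (m:ℝ))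
            push_cast [Nat.cast_sub this]
            ring
    calc ∑ σ ∈ M, ∑ σ' ∈ M.erase σ, ∑ ω ∈ univ.filter (fun ω =>
          (∀ i ∈ S ω, f ω i = σ i) ∧ (∀ i ∈ S ω, f ω i = σ' i)), p ω
        ≤ ∑ _σ ∈ M, ((m : ℝ) - 1) * δ := Finset.sum_le_sum hbound
      _ = (m : ℝ) * (((m : ℝ) - 1) * δ) := by
          rw [Finset.sum_const, hMcard, nsmul_eq_mul]
      _ = (m : ℝ) * ((m : ℝ) - 1) * δ := by ring
  have hmain : (m : ℝ) * ε ≤ 2 + (m : ℝ) * ((m : ℝ) - 1) * δ := by linarith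
  -- derive contradiction
  set x : ℝ := (m : ℝ)
  have hc : (4 / ε) * ε = 4 := div_mul_cancel₀ 4 (ne_of_gt hε)
  have h1 : x - 1 < 4 / ε := by linarith
  have h2 : 4 ≤ x * ε := by
    calc (4:ℝ) = (4/ε) * ε := hc.symm
      _ ≤ x * ε := by
        apply mul_le_mul_of_nonneg_right hm1 hε.le
  have h3 : x * ((x - 1) * ε) < x * 4 := by
    apply mul_lt_mul_of_pos_left _ (by linarith : (0:ℝ) < x)
    calc (x - 1) * ε < (4/ε) * ε := by
          apply mul_lt_mul_of_pos_right h1 hε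
      _ = 4 := hc
  -- m*(m-1)*δ < m*(m-1)*ε²/8 ≤ m*4*ε/8 = m*ε/2
  have h4 : x * (x - 1) * δ < x * ε / 2 := by
    have hx1 : (0:ℝ) < x * (x-1) := by nlinarith
    have : x * (x - 1) * δ < x * (x - 1) * (ε^2/8) :=
      mul_lt_mul_of_pos_left hδε hx1
    have h5 : x * (x - 1) * (ε^2/8) ≤ x * ε / 2 := by
      have := h3
      nlinarith [hε, sq_nonneg ε]
    linarith
  -- so x*ε < 2 + x*ε/2 ⇒ x*ε < 4, contradiction with h2
  linarith
end

section
/- Let (G_samp=(V2,V1,E_s), W) be an (α,δ)-sampler and G its two-step walk graph on V2. Then for every A, B ⊆ V2 with μ_G(A) > δ and μ_G(B) > α: (μ_G(A)−δ)(μ_G(B)−α) ≤ Pr_{(T1,T2)∼W}[T1∈A, T2∈B] ≤ μ_G(A)(μ_G(B)+α) + δ. -/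
open Finset

/-- Expander-mixing lemma for the two-step walk graph of an (α,δ)-sampler: for all
A, B ⊆ V2 with μ(A) > δ, μ(B) > α,
(μ(A)−δ)(μ(B)−α) ≤ Pr[T1∈A, T2∈B] ≤ μ(A)(μ(B)+α) + δ. -/
theorem stmt9 {V1 V2 : Type*} [Fintype V1] [Fintype V2]
    (P1 : V1 → ℝ) (hP1 : ∀ S, 0 ≤ P1 S) (hP1s : ∑ S, P1 S = 1)
    (c : V1 → V2 → ℝ) (hc : ∀ S T, 0 ≤ c S T) (hcs : ∀ S, ∑ T, c S T = 1)
    (P2 : V2 → ℝ) (hP2 : ∀ T, P2 T = ∑ S, P1 S * c S T)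
    (α δ : ℝ) (hα : 0 < α) (hδ : 0 < δ)
    (hsampler : ∀ f : V2 → ℝ, (∀ T, f T ∈ Set.Icc (0 : ℝ) 1) →
      ∑ S ∈ univ.filter (fun S =>
        α < |(∑ T, c S T * f T) - ∑ T, P2 T * f T|), P1 S ≤ δ)
    (A B : Finset V2)
    (hA : δ < ∑ T ∈ A, P2 T) (hB : α < ∑ T ∈ B, P2 T) :
    ((∑ T ∈ A, P2 T) - δ) * ((∑ T ∈ B, P2 T) - α)
        ≤ ∑ S, P1 S * (∑ T1 ∈ A, c S T1) * (∑ T2 ∈ B, c S T2) ∧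
      ∑ S, P1 S * (∑ T1 ∈ A, c S T1) * (∑ T2 ∈ B, c S T2)
        ≤ (∑ T ∈ A, P2 T) * ((∑ T ∈ B, P2 T) + α) + δ := by
  classical
  set μA := ∑ T ∈ A, P2 T with hμA
  set μB := ∑ T ∈ B, P2 T with hμB
  set q : V1 → ℝ := fun S => ∑ T1 ∈ A, c S T1 with hq
  set p : V1 → ℝ := fun S => ∑ T2 ∈ B, c S T2 with hp
  have hq0 : ∀ S, 0 ≤ q S := fun S => Finset.sum_nonneg fun T _ => hc S T
  have hp0 : ∀ S, 0 ≤ p S := fun S => Finset.sum_nonneg fun T _ => hc S T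
  have hq1 : ∀ S, q S ≤ 1 := fun S => by
    rw [← hcs S]
    exact Finset.sum_le_sum_of_subset_of_nonneg (Finset.subset_univ A)
      (fun T _ _ => hc S T)
  have hp1 : ∀ S, p S ≤ 1 := fun S => by
    rw [← hcs S]
    exact Finset.sum_le_sum_of_subset_of_nonneg (Finset.subset_univ B)
      (fun T _ _ => hc S T)
  -- the averaging identities
  have hqμ : ∑ S, P1 S * q S = μA := by
    rw [hμA, hq]
    simp only [Finset.mul_sum]
    rw [Finset.sum_comm]
    exact Finset.sum_congr rfl fun T _ => (hP2 T).symm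
  have hpμ : ∑ S, P1 S * p S = μB := by
    rw [hμB, hp]
    simp only [Finset.mul_sum]
    rw [Finset.sum_comm]
    exact Finset.sum_congr rfl fun T _ => (hP2 T).symm
  -- bad set
  set R : Finset V1 := univ.filter (fun S => α < |p S - μB|) with hRdef
  have hR : ∑ S ∈ R, P1 S ≤ δ := by
    have := hsampler (fun T => if T ∈ B then 1 else 0)
      (fun T => by by_cases h : T ∈ B <;> simp [h])
    simpa [mul_ite, mul_one, mul_zero, Finset.sum_ite_mem, ← Finset.sum_filter,
      Finset.filter_mem_eq_inter, Finset.univ_inter, ← hp, ← hμB] using this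
  have hRq : ∑ S ∈ R, P1 S * q S ≤ δ := by
    refine le_trans (Finset.sum_le_sum fun S _ => ?_) hR
    calc P1 S * q S ≤ P1 S * 1 := by
          exact mul_le_mul_of_nonneg_left (hq1 S) (hP1 S)
      _ = P1 S := mul_one _
  have hsplit : ∑ S, P1 S * q S * p S
      = ∑ S ∈ R, P1 S * q S * p S + ∑ S ∈ Rᶜ, P1 S * q S * p S :=
    (Finset.sum_add_sum_compl R _).symm
  have hsplitq : ∑ S, P1 S * q S
      = ∑ S ∈ R, P1 S * q S + ∑ S ∈ Rᶜ, P1 S * q S :=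
    (Finset.sum_add_sum_compl R _).symm
  have hgood : ∀ S ∈ Rᶜ, |p S - μB| ≤ α := by
    intro S hS
    rw [Finset.mem_compl, hRdef, Finset.mem_filter] at hS
    push_neg at hS
    exact hS (Finset.mem_univ S)
  constructor
  · -- lower bound
    have h1 : ∑ S ∈ Rᶜ, P1 S * q S * (μB - α) ≤ ∑ S ∈ Rᶜ, P1 S * q S * p S := by
      refine Finset.sum_le_sum fun S hS => ?_
      have := hgood S hS
      have hlow : μB - α ≤ p S := by
        have := abs_le.mp this
        linarith [this.1]
      exact mul_le_mul_of_nonneg_left hlow (mul_nonneg (hP1 S) (hq0 S))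
    have h2 : μA - δ ≤ ∑ S ∈ Rᶜ, P1 S * q S := by
      have : ∑ S ∈ Rᶜ, P1 S * q S = μA - ∑ S ∈ R, P1 S * q S := by
        rw [← hqμ, hsplitq]; ring
      rw [this]; linarith
    have h3 : (μA - δ) * (μB - α) ≤ (∑ S ∈ Rᶜ, P1 S * q S) * (μB - α) := by
      apply mul_le_mul_of_nonneg_right h2; linarith
    have h4 : (∑ S ∈ Rᶜ, P1 S * q S) * (μB - α)
        = ∑ S ∈ Rᶜ, P1 S * q S * (μB - α) := by rw [Finset.sum_mul]
    have h5 : 0 ≤ ∑ S ∈ R, P1 S * q S * p S :=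
      Finset.sum_nonneg fun S _ => mul_nonneg (mul_nonneg (hP1 S) (hq0 S)) (hp0 S)
    rw [hsplit]
    linarith
  · -- upper bound
    have h1 : ∑ S ∈ R, P1 S * q S * p S ≤ δ := by
      refine le_trans (Finset.sum_le_sum fun S _ => ?_) hRq
      exact mul_le_mul_of_nonneg_left (hp1 S) (mul_nonneg (hP1 S) (hq0 S)) |>.trans
        (le_of_eq (mul_one _))
    have h2 : ∑ S ∈ Rᶜ, P1 S * q S * p S ≤ ∑ S ∈ Rᶜ, P1 S * q S * (μB + α) := by
      refine Finset.sum_le_sum fun S hS => ?_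
      have := abs_le.mp (hgood S hS)
      have hup : p S ≤ μB + α := by linarith [this.2]
      exact mul_le_mul_of_nonneg_left hup (mul_nonneg (hP1 S) (hq0 S))
    have h3 : ∑ S ∈ Rᶜ, P1 S * q S * (μB + α) ≤ μA * (μB + α) := by
      rw [← Finset.sum_mul]
      apply mul_le_mul_of_nonneg_right _ (by linarith)
      calc ∑ S ∈ Rᶜ, P1 S * q S ≤ ∑ S, P1 S * q S :=
            Finset.sum_le_sum_of_subset_of_nonneg (Finset.subset_univ _)
              (fun S _ _ => mul_nonneg (hP1 S) (hq0 S))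
        _ = μA := hqμ
    rw [hsplit]
    linarith
end

section
/- Let α, β, δ ∈ (0,1) with α, δ < β²/100, let (G_samp = (V2,V1,E), W) be an (α,δ)-sampler, and let G be its two-step walk graph on V2. Then for every A ⊆ V2 with μ_G(A) ≥ β there exists B ⊆ A with μ_G(B) ≥ β/4 such that the induced graph G_B satisfies λ(G_B) ≤ 99/100. -/
/-!
The two-step walk matrix `W T₁ T₂ = ∑ S, P1 S * c S T₁ * c S T₂` is a Gram matrix, hence
positive semidefinite. So if `λ(G_B) > 99/100`, some `f ⊥ 1` has Dirichlet energy below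
`(1/25) ‖f‖²`; splitting `f` at a `P2`-median into its positive and negative parts, one of them
has the same property, and Cheeger's sweep over its level sets yields `C ⊆ B` carrying at most
half of the mass of `B` with `W(C, B \ C) < W(C, B) / 5`.

Starting from `B = A`, such sets are peeled off while `W(A \ B, B) ≤ W(A \ B, A) / 5`
persists. Testing the sampler on indicators gives the mixing bounds
`W(C, D) ≥ (1 - 2δ)(μ C - α)(μ D - α)` and `W(C, A) ≤ (μ A + α) μ C + δ`, which contradict
that invariant once `A \ B` has mass `β / 10`. Hence the process stops at an expander `B` of
mass more than `μ A - β / 10 ≥ β / 4`.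
-/

open Finset

theorem posPart_sq_add_negPart_sq (a : ℝ) : a⁺ ^ 2 + a⁻ ^ 2 = a ^ 2 := by
  rcases le_total 0 a with h | h
  · rw [posPart_eq_self.2 h, negPart_eq_zero.2 h]; ring
  · rw [posPart_eq_zero.2 h, negPart_eq_neg.2 h]; ring

theorem sq_posPart_sub_add_sq_negPart_sub_le (a b : ℝ) :
    (a⁺ - b⁺) ^ 2 + (a⁻ - b⁻) ^ 2 ≤ (a - b) ^ 2 := by
  rcases le_total 0 a with ha | ha <;> rcases le_total 0 b with hb | hb <;>
    simp only [posPart_eq_self.2, negPart_eq_zero.2, posPart_eq_zero.2, negPart_eq_neg.2,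
      ha, hb] <;> nlinarith

theorem exists_weighted_median {V : Type*} (B : Finset V) (μ f : V → ℝ) (hμ : ∀ v, 0 ≤ μ v) :
    ∃ c, ∑ v ∈ B with c < f v, μ v ≤ (∑ v ∈ B, μ v) / 2 ∧
      ∑ v ∈ B with f v < c, μ v ≤ (∑ v ∈ B, μ v) / 2 := by
  classical
  rcases B.eq_empty_or_nonempty with rfl | hB
  · simp
  set M := ∑ v ∈ B, μ v
  have hM : 0 ≤ M := sum_nonneg fun v _ => hμ v
  set D := (B.image f).filter fun t => ∑ v ∈ B with t < f v, μ v ≤ M / 2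
  have hD : D.Nonempty := by
    refine ⟨(B.image f).max' (hB.image f), mem_filter.2 ⟨max'_mem _ _, ?_⟩⟩
    rw [filter_false_of_mem fun v hv => not_lt.2 (le_max' _ _ (mem_image_of_mem f hv)),
      sum_empty]
    positivity
  refine ⟨D.min' hD, (mem_filter.1 (min'_mem D hD)).2, ?_⟩
  by_contra! hlt
  obtain ⟨v₀, hv₀, hmax⟩ := exists_max_image _ f
    (nonempty_of_sum_ne_zero (by linarith : ∑ v ∈ B with f v < D.min' hD, μ v ≠ 0))
  rw [mem_filter] at hv₀
  -- `f v₀` is the largest value below the minimum of `D`, so it would belong to `D`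
  have hv₀D : f v₀ ∈ D := by
    refine mem_filter.2 ⟨mem_image_of_mem f hv₀.1, ?_⟩
    have hsub : {v ∈ B | f v < D.min' hD} ⊆ {v ∈ B | ¬ f v₀ < f v} := fun v hv => by
      rw [mem_filter] at hv ⊢
      exact ⟨hv.1, not_lt.2 (hmax v (mem_filter.2 hv))⟩
    have := sum_le_sum_of_subset_of_nonneg hsub fun v _ _ => hμ v
    have := sum_filter_add_sum_filter_not B (fun v => f v₀ < f v) μ
    linarith
  exact (min'_le D _ hv₀D).not_gt hv₀.2

theorem exists_pos_weights_sum_Ioc_eq_posPart (X : Finset ℝ) :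
    ∃ w : ℝ → ℝ, (∀ s ∈ X, 0 < w s) ∧
      ∀ x ∈ X, ∀ y ∈ X, ∑ s ∈ X with y < s ∧ s ≤ x, w s = (x - y)⁺ := by
  classical
  induction X using Finset.induction_on_max with
  | empty => exact ⟨fun _ => 1, by simp, by simp⟩
  | insert a X hlt ih =>
    obtain ⟨w, hw0, hw⟩ := ih
    have haX : a ∉ X := fun h => (hlt a h).false
    rcases X.eq_empty_or_nonempty with rfl | hne
    · exact ⟨fun _ => 1, by simp, by simp⟩
    -- the new largest point `a` gets the gap to the previous largest point `b`
    set b := X.max' hne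
    have hb : b ∈ X := max'_mem X hne
    set w' := Function.update w a (a - b)
    have hw' : ∀ p : ℝ → Prop, [DecidablePred p] →
        ∑ s ∈ X with p s, w' s = ∑ s ∈ X with p s, w s :=
      fun p _ => sum_congr rfl fun s hs =>
        Function.update_of_ne (ne_of_mem_of_not_mem (mem_filter.1 hs).1 haX) _ _
    refine ⟨w', fun s hs => ?_, fun x hx y hy => ?_⟩
    · rcases mem_insert.1 hs with rfl | hs
      · simpa [w'] using hlt b hb
      · simpa [w', Function.update_of_ne (ne_of_mem_of_not_mem hs haX)] using hw0 s hs
    rcases mem_insert.1 hx with hxa | hx <;> rcases mem_insert.1 hy with hya | hy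
    · rw [hxa, hya, sub_self, posPart_zero,
        filter_false_of_mem fun s _ h => (h.1.trans_le h.2).false, sum_empty]
    · have hyb : y ≤ b := le_max' X y hy
      have hfilter : {s ∈ X | y < s ∧ s ≤ a} = {s ∈ X | y < s ∧ s ≤ b} :=
        filter_congr fun s hs => by
          have := (hlt s hs).le
          have : s ≤ b := le_max' X s hs
          tauto
      rw [hxa, filter_insert, if_pos ⟨hlt y hy, le_rfl⟩, sum_insert (by simp [haX]), hw',
        hfilter, hw b hb y hy]
      simp only [w', Function.update_self]
      rw [posPart_eq_self.2 (sub_nonneg.2 hyb),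
        posPart_eq_self.2 (sub_nonneg.2 (hlt y hy).le)]
      ring
    · rw [hya, filter_insert, if_neg fun h => h.1.false,
        filter_false_of_mem fun s hs h => (hlt s hs).not_gt h.1, sum_empty,
        posPart_eq_zero.2 (sub_nonpos.2 (hlt x hx).le)]
    · rw [filter_insert, if_neg fun h => (hlt x hx).not_ge h.2, hw', hw x hx y hy]

theorem Finset.exists_subset_of_forall_exists_ssubset {α : Type*} {P Q : Finset α → Prop}
    {s : Finset α} (hs : P s) (h : ∀ t ⊆ s, P t → ¬ Q t → ∃ u ⊂ t, P u) :
    ∃ t ⊆ s, P t ∧ Q t := by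
  induction s using Finset.strongInduction with
  | H s ih =>
    by_cases hQ : Q s
    · exact ⟨s, subset_rfl, hs, hQ⟩
    obtain ⟨u, hus, hu⟩ := h s subset_rfl hs hQ
    obtain ⟨t, htu, ht⟩ := ih u hus hu fun t ht => h t (ht.trans hus.subset)
    exact ⟨t, htu.trans hus.subset, ht⟩

section WeightedGraph

variable {V : Type*} (W : V → V → ℝ) (B : Finset V)

def weightedDegree (v : V) : ℝ := ∑ u ∈ B, W v u

def edgeWeight (C D : Finset V) : ℝ := ∑ u ∈ C, ∑ v ∈ D, W u v

def quadForm (x y : V → ℝ) : ℝ := ∑ v ∈ B, ∑ u ∈ B, W v u * (x v * y u)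

def dirichletEnergy (x : V → ℝ) : ℝ := ∑ v ∈ B, ∑ u ∈ B, W v u * (x v - x u) ^ 2

def weightedNormSq (x : V → ℝ) : ℝ := ∑ v ∈ B, weightedDegree W B v * x v ^ 2

/-- At a vertex of degree `0` this is `0 / 0 = 0`. -/
noncomputable def walkAverage (f : V → ℝ) (v : V) : ℝ :=
  (∑ u ∈ B, W v u * f u) / weightedDegree W B v

/-- `λ(G_B) ≤ r`: the walk operator of the graph induced on `B` has norm at most `r` on the
degree-weighted orthogonal complement of the constants. -/
def IsSpectralExpander (r : ℝ) : Prop :=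
  ∀ f : V → ℝ, ∑ v ∈ B, weightedDegree W B v * f v = 0 →
    weightedNormSq W B (walkAverage W B f) ≤ r ^ 2 * weightedNormSq W B f

variable {W B}

theorem weightedDegree_nonneg (hW : ∀ u v, 0 ≤ W u v) (v : V) : 0 ≤ weightedDegree W B v :=
  sum_nonneg fun u _ => hW v u

theorem weightedNormSq_nonneg (hW : ∀ u v, 0 ≤ W u v) (x : V → ℝ) :
    0 ≤ weightedNormSq W B x :=
  sum_nonneg fun v _ => mul_nonneg (weightedDegree_nonneg hW v) (sq_nonneg _)

theorem dirichletEnergy_nonneg (hW : ∀ u v, 0 ≤ W u v) (x : V → ℝ) :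
    0 ≤ dirichletEnergy W B x :=
  sum_nonneg fun v _ => sum_nonneg fun u _ => mul_nonneg (hW v u) (sq_nonneg _)

theorem quadForm_comm (hWs : ∀ u v, W u v = W v u) (x y : V → ℝ) :
    quadForm W B x y = quadForm W B y x := by
  rw [quadForm, quadForm, sum_comm]
  exact sum_congr rfl fun v _ => sum_congr rfl fun u _ => by rw [hWs]; ring

theorem sum_sum_mul_sq_add_sq (hWs : ∀ u v, W u v = W v u) (x : V → ℝ) :
    ∑ v ∈ B, ∑ u ∈ B, W v u * (x v ^ 2 + x u ^ 2) = 2 * weightedNormSq W B x := by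
  have h₁ : ∑ v ∈ B, ∑ u ∈ B, W v u * x v ^ 2 = weightedNormSq W B x :=
    sum_congr rfl fun v _ => by rw [weightedDegree, sum_mul]
  have h₂ : ∑ v ∈ B, ∑ u ∈ B, W v u * x u ^ 2 = weightedNormSq W B x := by
    rw [sum_comm]
    refine sum_congr rfl fun u _ => ?_
    rw [weightedDegree, sum_mul]
    exact sum_congr rfl fun v _ => by rw [hWs]
  simp only [mul_add, sum_add_distrib, h₁, h₂]
  ring

theorem dirichletEnergy_eq (hWs : ∀ u v, W u v = W v u) (x : V → ℝ) :
    dirichletEnergy W B x = 2 * weightedNormSq W B x - 2 * quadForm W B x x := by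
  rw [← sum_sum_mul_sq_add_sq hWs, quadForm, dirichletEnergy, mul_sum, ← sum_sub_distrib]
  refine sum_congr rfl fun v _ => ?_
  rw [mul_sum, ← sum_sub_distrib]
  exact sum_congr rfl fun u _ => by ring

theorem sum_sum_mul_add_sq_eq (hWs : ∀ u v, W u v = W v u) (x : V → ℝ) :
    ∑ v ∈ B, ∑ u ∈ B, W v u * (x v + x u) ^ 2 =
      4 * weightedNormSq W B x - dirichletEnergy W B x := by
  have h : ∑ v ∈ B, ∑ u ∈ B, W v u * (x v + x u) ^ 2 =
      2 * weightedNormSq W B x + 2 * quadForm W B x x := by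
    rw [← sum_sum_mul_sq_add_sq hWs, quadForm, mul_sum, ← sum_add_distrib]
    refine sum_congr rfl fun v _ => ?_
    rw [mul_sum, ← sum_add_distrib]
    exact sum_congr rfl fun u _ => by ring
  rw [h, dirichletEnergy_eq hWs]
  ring

theorem quadForm_self_le (hW : ∀ u v, 0 ≤ W u v) (hWs : ∀ u v, W u v = W v u) (x : V → ℝ) :
    quadForm W B x x ≤ weightedNormSq W B x := by
  linarith [dirichletEnergy_nonneg (B := B) hW x, dirichletEnergy_eq (B := B) hWs x]

theorem quadForm_sq_le (hWs : ∀ u v, W u v = W v u) (hpsd : ∀ x, 0 ≤ quadForm W B x x)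
    (x y : V → ℝ) : quadForm W B x y ^ 2 ≤ quadForm W B x x * quadForm W B y y := by
  have hexpand : ∀ t : ℝ, quadForm W B (fun v => x v + t * y v) (fun v => x v + t * y v) =
      quadForm W B y y * (t * t) + (quadForm W B x y + quadForm W B y x) * t +
        quadForm W B x x := by
    intro t
    simp only [quadForm, sum_mul, ← sum_add_distrib]
    exact sum_congr rfl fun v _ => sum_congr rfl fun u _ => by ring
  have hdiscr := discrim_le_zero fun t => hexpand t ▸ hpsd _
  rw [discrim, ← quadForm_comm hWs x y] at hdiscr
  linarith

theorem weightedNormSq_walkAverage_le (hW : ∀ u v, 0 ≤ W u v) (hWs : ∀ u v, W u v = W v u)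
    (hpsd : ∀ x, 0 ≤ quadForm W B x x) (f : V → ℝ) :
    weightedNormSq W B (walkAverage W B f) ≤ quadForm W B f f := by
  set g := walkAverage W B f
  have hgf : quadForm W B g f = weightedNormSq W B g := by
    refine sum_congr rfl fun v _ => ?_
    have hsum : ∑ u ∈ B, W v u * (g v * f u) = g v * ∑ u ∈ B, W v u * f u := by
      rw [mul_sum]
      exact sum_congr rfl fun u _ => by ring
    rw [hsum]
    rcases eq_or_ne (weightedDegree W B v) 0 with h | h
    · simp [g, walkAverage, h]
    · simp only [g, walkAverage]
      field_simp
  have hcs := quadForm_sq_le hWs hpsd g f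
  rw [hgf] at hcs
  nlinarith [quadForm_self_le (B := B) hW hWs g, weightedNormSq_nonneg (B := B) hW g, hpsd f]

theorem exists_dirichletEnergy_lt_of_not_isSpectralExpander (hW : ∀ u v, 0 ≤ W u v)
    (hWs : ∀ u v, W u v = W v u) (hpsd : ∀ x, 0 ≤ quadForm W B x x) {r : ℝ}
    (hB : ¬ IsSpectralExpander W B r) :
    ∃ f : V → ℝ, ∑ v ∈ B, weightedDegree W B v * f v = 0 ∧
      dirichletEnergy W B f < 2 * (1 - r ^ 2) * weightedNormSq W B f := by
  simp only [IsSpectralExpander, not_forall, not_le, exists_prop] at hB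
  obtain ⟨f, hf, hlt⟩ := hB
  refine ⟨f, hf, ?_⟩
  linarith [weightedNormSq_walkAverage_le hW hWs hpsd f, dirichletEnergy_eq (B := B) hWs f]

theorem exists_nonneg_dirichletEnergy_lt (hW : ∀ u v, 0 ≤ W u v) {μ : V → ℝ}
    (hμ : ∀ v, 0 ≤ μ v) {ε : ℝ} (hε : 0 ≤ ε) {f : V → ℝ}
    (hf : ∑ v ∈ B, weightedDegree W B v * f v = 0)
    (hE : dirichletEnergy W B f < ε * weightedNormSq W B f) :
    ∃ h : V → ℝ, (∀ v, 0 ≤ h v) ∧ ∑ v ∈ B with 0 < h v, μ v ≤ (∑ v ∈ B, μ v) / 2 ∧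
      dirichletEnergy W B h < ε * weightedNormSq W B h := by
  obtain ⟨c, hc_gt, hc_lt⟩ := exists_weighted_median B μ f hμ
  set fpos : V → ℝ := fun v => (f v - c)⁺
  set fneg : V → ℝ := fun v => (f v - c)⁻
  -- shifting by a constant only increases the norm, as `f` is orthogonal to the constants
  have hN : weightedNormSq W B f ≤ weightedNormSq W B fpos + weightedNormSq W B fneg := by
    have hshift : weightedNormSq W B fpos + weightedNormSq W B fneg =
        weightedNormSq W B f - 2 * c * ∑ v ∈ B, weightedDegree W B v * f v +
          c ^ 2 * ∑ v ∈ B, weightedDegree W B v := by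
      simp only [weightedNormSq, ← sum_add_distrib, ← mul_add, fpos, fneg,
        posPart_sq_add_negPart_sq, mul_sum, ← sum_sub_distrib]
      exact sum_congr rfl fun v _ => by ring
    rw [hshift, hf]
    nlinarith [sum_nonneg fun v (_ : v ∈ B) => weightedDegree_nonneg (B := B) hW v]
  have hE' : dirichletEnergy W B fpos + dirichletEnergy W B fneg ≤ dirichletEnergy W B f := by
    simp only [dirichletEnergy, ← sum_add_distrib, ← mul_add]
    gcongr with v _ u _
    · exact hW v u
    · simpa using sq_posPart_sub_add_sq_negPart_sub_le (f v - c) (f u - c)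
  by_contra! H
  have hposE := H fpos (fun v => posPart_nonneg _) (by simpa [fpos, posPart_pos_iff] using hc_gt)
  have hnegE := H fneg (fun v => negPart_nonneg _) (by simpa [fneg, negPart_pos_iff] using hc_lt)
  nlinarith [mul_le_mul_of_nonneg_left hN hε]

theorem exists_levelSet_edgeWeight_lt [DecidableEq V] {ε : ℝ} (x : V → ℝ)
    (hx : ∀ v ∈ B, 0 ≤ x v)
    (hcoarea : ∑ u ∈ B, ∑ v ∈ B, W u v * (x u - x v)⁺ <
      ε * ∑ u ∈ B, weightedDegree W B u * x u) :
    ∃ s, 0 < s ∧ edgeWeight W {v ∈ B | s ≤ x v} (B \ {v ∈ B | s ≤ x v}) <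
      ε * edgeWeight W {v ∈ B | s ≤ x v} B := by
  set X := insert 0 (B.image x)
  obtain ⟨w, hw0, hw⟩ := exists_pos_weights_sum_Ioc_eq_posPart X
  have hxX : ∀ v ∈ B, x v ∈ X := fun v hv => mem_insert_of_mem (mem_image_of_mem x hv)
  set T := X.filter (0 < ·)
  have hlevel : ∀ a ∈ X, ∀ b ∈ X, 0 ≤ b →
      ∑ s ∈ T, (if b < s ∧ s ≤ a then w s else 0) = (a - b)⁺ := by
    intro a ha b hb hb0
    rw [← sum_filter, filter_filter, ← hw a ha b hb]
    refine sum_congr (filter_congr fun s _ => ?_) fun _ _ => rfl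
    exact ⟨fun hs => hs.2, fun hs => ⟨hb0.trans_lt hs.1, hs⟩⟩
  -- the discrete co-area formulas for the volumes and the cuts of the level sets
  have hvol : ∑ s ∈ T, w s * edgeWeight W {v ∈ B | s ≤ x v} B =
      ∑ u ∈ B, weightedDegree W B u * x u := by
    calc ∑ s ∈ T, w s * edgeWeight W {v ∈ B | s ≤ x v} B
        = ∑ s ∈ T, ∑ u ∈ B, (if 0 < s ∧ s ≤ x u then w s else 0) * weightedDegree W B u := by
          refine sum_congr rfl fun s hs => ?_
          rw [edgeWeight, sum_filter, mul_sum]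
          refine sum_congr rfl fun u _ => ?_
          simp only [(mem_filter.1 hs).2, true_and]
          split_ifs <;> simp [weightedDegree]
      _ = ∑ u ∈ B, weightedDegree W B u * x u := by
          rw [sum_comm]
          refine sum_congr rfl fun u hu => ?_
          rw [← sum_mul, hlevel _ (hxX u hu) 0 (mem_insert_self _ _) le_rfl, sub_zero,
            posPart_eq_self.2 (hx u hu), mul_comm]
  have hcut : ∑ s ∈ T, w s * edgeWeight W {v ∈ B | s ≤ x v} (B \ {v ∈ B | s ≤ x v}) =
      ∑ u ∈ B, ∑ v ∈ B, W u v * (x u - x v)⁺ := by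
    calc ∑ s ∈ T, w s * edgeWeight W {v ∈ B | s ≤ x v} (B \ {v ∈ B | s ≤ x v})
        = ∑ s ∈ T, ∑ u ∈ B, ∑ v ∈ B, (if x v < s ∧ s ≤ x u then w s else 0) * W u v := by
          refine sum_congr rfl fun s _ => ?_
          rw [edgeWeight, ← filter_not, sum_filter, mul_sum]
          refine sum_congr rfl fun u _ => ?_
          rw [sum_filter]
          split_ifs with hu <;> simp [hu, mul_sum, not_le]
      _ = ∑ u ∈ B, ∑ v ∈ B, W u v * (x u - x v)⁺ := by
          rw [sum_comm]
          refine sum_congr rfl fun u hu => ?_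
          rw [sum_comm]
          refine sum_congr rfl fun v hv => ?_
          rw [← sum_mul, hlevel _ (hxX u hu) _ (hxX v hv) (hx v hv), mul_comm]
  obtain ⟨s, hs, hlt⟩ := exists_lt_of_sum_lt (s := T)
    (f := fun s => w s * edgeWeight W {v ∈ B | s ≤ x v} (B \ {v ∈ B | s ≤ x v}))
    (g := fun s => w s * (ε * edgeWeight W {v ∈ B | s ≤ x v} B)) (by
      simp only [mul_left_comm (w _) ε, ← mul_sum]
      rwa [hvol, hcut])
  exact ⟨s, (mem_filter.1 hs).2, lt_of_mul_lt_mul_left hlt (hw0 s (mem_filter.1 hs).1).le⟩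

theorem sq_sum_sum_mul_posPart_sub_sq_le (hW : ∀ u v, 0 ≤ W u v) (hWs : ∀ u v, W u v = W v u)
    (h : V → ℝ) :
    (∑ u ∈ B, ∑ v ∈ B, W u v * (h u ^ 2 - h v ^ 2)⁺) ^ 2 ≤
      dirichletEnergy W B h * weightedNormSq W B h := by
  have habs : 2 * ∑ u ∈ B, ∑ v ∈ B, W u v * (h u ^ 2 - h v ^ 2)⁺ =
      ∑ u ∈ B, ∑ v ∈ B, W u v * |h u ^ 2 - h v ^ 2| := by
    have hswap : ∑ u ∈ B, ∑ v ∈ B, W u v * (h u ^ 2 - h v ^ 2)⁺ =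
        ∑ u ∈ B, ∑ v ∈ B, W u v * (h u ^ 2 - h v ^ 2)⁻ := by
      rw [sum_comm]
      exact sum_congr rfl fun u _ => sum_congr rfl fun v _ => by rw [hWs, ← posPart_neg, neg_sub]
    rw [two_mul]
    nth_rw 2 [hswap]
    rw [← sum_add_distrib]
    refine sum_congr rfl fun u _ => ?_
    rw [← sum_add_distrib]
    exact sum_congr rfl fun v _ => by rw [← mul_add, posPart_add_negPart]
  have hcs : (∑ u ∈ B, ∑ v ∈ B, W u v * |h u ^ 2 - h v ^ 2|) ^ 2 ≤
      dirichletEnergy W B h * ∑ u ∈ B, ∑ v ∈ B, W u v * (h u + h v) ^ 2 := by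
    have := sum_sq_le_sum_mul_sum_of_sq_le_mul (B ×ˢ B)
      (r := fun p => W p.1 p.2 * |h p.1 ^ 2 - h p.2 ^ 2|)
      (f := fun p => W p.1 p.2 * (h p.1 - h p.2) ^ 2)
      (g := fun p => W p.1 p.2 * (h p.1 + h p.2) ^ 2)
      (fun p _ => mul_nonneg (hW _ _) (sq_nonneg _))
      (fun p _ => mul_nonneg (hW _ _) (sq_nonneg _))
      (fun p _ => le_of_eq (by rw [mul_pow, sq_abs]; ring))
    simp only [sum_product] at this
    exact this
  rw [← habs, sum_sum_mul_add_sq_eq hWs] at hcs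
  nlinarith [dirichletEnergy_nonneg (B := B) hW h]

theorem exists_sparse_cut_of_not_isSpectralExpander [DecidableEq V] (hW : ∀ u v, 0 ≤ W u v)
    (hWs : ∀ u v, W u v = W v u) (hpsd : ∀ x, 0 ≤ quadForm W B x x) {μ : V → ℝ}
    (hμ : ∀ v, 0 ≤ μ v) {r ε : ℝ} (hε : 0 ≤ ε) (hrε : 2 * (1 - r ^ 2) ≤ ε ^ 2)
    (hB : ¬ IsSpectralExpander W B r) :
    ∃ C ⊆ B, C.Nonempty ∧ ∑ v ∈ C, μ v ≤ (∑ v ∈ B, μ v) / 2 ∧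
      edgeWeight W C (B \ C) < ε * edgeWeight W C B := by
  obtain ⟨f, hf, hEf⟩ := exists_dirichletEnergy_lt_of_not_isSpectralExpander hW hWs hpsd hB
  obtain ⟨h, h0, hsupp, hEh⟩ := exists_nonneg_dirichletEnergy_lt hW hμ (sq_nonneg ε) hf
    (hEf.trans_le (mul_le_mul_of_nonneg_right hrε (weightedNormSq_nonneg hW f)))
  have hN : 0 < weightedNormSq W B h := by
    nlinarith [dirichletEnergy_nonneg (B := B) hW h, weightedNormSq_nonneg (B := B) hW h,
      sq_nonneg ε]
  have hcoarea : ∑ u ∈ B, ∑ v ∈ B, W u v * (h u ^ 2 - h v ^ 2)⁺ < ε * weightedNormSq W B h := by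
    refine lt_of_pow_lt_pow_left₀ 2 (by positivity) ?_
    calc _ ≤ dirichletEnergy W B h * weightedNormSq W B h :=
          sq_sum_sum_mul_posPart_sub_sq_le hW hWs h
      _ < ε ^ 2 * weightedNormSq W B h * weightedNormSq W B h := by gcongr
      _ = (ε * weightedNormSq W B h) ^ 2 := by ring
  obtain ⟨s, hs, hcut⟩ := exists_levelSet_edgeWeight_lt (fun v => h v ^ 2)
    (fun v _ => sq_nonneg _) hcoarea
  refine ⟨_, filter_subset _ _, ?_, ?_, hcut⟩
  · by_contra hempty
    rw [not_nonempty_iff_eq_empty] at hempty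
    simp [hempty, edgeWeight] at hcut
  · refine (sum_le_sum_of_subset_of_nonneg (fun v hv => ?_) fun v _ _ => hμ v).trans hsupp
    rw [mem_filter] at hv ⊢
    exact ⟨hv.1, by nlinarith [h0 v]⟩

theorem edgeWeight_sdiff_sdiff_le [DecidableEq V] (hW : ∀ u v, 0 ≤ W u v) {A C : Finset V}
    {ε : ℝ} (hε : 0 ≤ ε) (hBA : B ⊆ A) (hCB : C ⊆ B)
    (hB : edgeWeight W (A \ B) B ≤ ε * edgeWeight W (A \ B) A)
    (hC : edgeWeight W C (B \ C) ≤ ε * edgeWeight W C B) :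
    edgeWeight W (A \ (B \ C)) (B \ C) ≤ ε * edgeWeight W (A \ (B \ C)) A := by
  have hmono : ∀ {X D D' : Finset V}, D ⊆ D' → edgeWeight W X D ≤ edgeWeight W X D' :=
    fun hD => sum_le_sum fun u _ => sum_le_sum_of_subset_of_nonneg hD fun v _ _ => hW u v
  have hdisj : Disjoint (A \ B) C := disjoint_sdiff_self_left.mono_right hCB
  have hunion : ∀ D, edgeWeight W (A \ (B \ C)) D = edgeWeight W (A \ B) D + edgeWeight W C D :=
    fun D => by rw [sdiff_sdiff_eq_sdiff_union (hCB.trans hBA), edgeWeight, sum_union hdisj]; rfl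
  rw [hunion, hunion]
  nlinarith [hmono (X := A \ B) (sdiff_subset : B \ C ⊆ B), hmono (X := C) hBA]

theorem fifth_mul_add_lt_mixing_bound {α β δ m r b : ℝ} (hβ : 0 < β) (hβm : β ≤ m)
    (hm : m ≤ 1) (hα : α < β ^ 2 / 100) (hδ : δ < β ^ 2 / 100) (hr : β / 10 ≤ r)
    (hb : (m - β / 10) / 2 < b) :
    1 / 5 * ((m + α) * r + δ) < (1 - 2 * δ) * ((r - α) * (b - α)) := by
  have hr0 : 0 < r := by linarith
  have hαr : α ≤ r / 10 := by nlinarith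
  have hαm : α ≤ m / 100 := by nlinarith
  have hδ' : δ ≤ m * r / 10 := by nlinarith [mul_le_mul hβm hr (by positivity) (by linarith)]
  have hδ1 : δ ≤ 1 / 100 := by nlinarith
  calc 1 / 5 * ((m + α) * r + δ) ≤ 1 / 5 * ((101 / 100 * m) * r + m * r / 10) := by
        gcongr; linarith
    _ < 98 / 100 * ((9 / 10 * r) * (44 / 100 * m)) := by nlinarith [mul_pos hr0 (hβ.trans_le hβm)]
    _ ≤ (1 - 2 * δ) * ((r - α) * (b - α)) := by
        have := mul_pos hr0 (hβ.trans_le hβm)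
        gcongr <;> linarith

theorem exists_large_isSpectralExpander_of_mixing [DecidableEq V] (hW : ∀ u v, 0 ≤ W u v)
    (hWs : ∀ u v, W u v = W v u)
    (hpsd : ∀ (B : Finset V) x, 0 ≤ quadForm W B x x) {μ : V → ℝ} (hμ : ∀ v, 0 ≤ μ v)
    {A : Finset V} {α β δ : ℝ} (hβ : 0 < β) (hA : β ≤ ∑ v ∈ A, μ v) (hA1 : ∑ v ∈ A, μ v ≤ 1)
    (hα : α < β ^ 2 / 100) (hδ : δ < β ^ 2 / 100)
    (hlow : ∀ C D : Finset V, α ≤ ∑ v ∈ C, μ v → α ≤ ∑ v ∈ D, μ v →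
      (1 - 2 * δ) * ((∑ v ∈ C, μ v - α) * (∑ v ∈ D, μ v - α)) ≤ edgeWeight W C D)
    (hup : ∀ C : Finset V, edgeWeight W C A ≤ (∑ v ∈ A, μ v + α) * ∑ v ∈ C, μ v + δ) :
    ∃ B ⊆ A, β / 4 ≤ ∑ v ∈ B, μ v ∧ IsSpectralExpander W B (99 / 100) := by
  refine (Finset.exists_subset_of_forall_exists_ssubset (s := A)
    (P := fun B => edgeWeight W (A \ B) B ≤ 1 / 5 * edgeWeight W (A \ B) A ∧
      ∑ v ∈ A, μ v - β / 10 < ∑ v ∈ B, μ v)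
    (Q := fun B => IsSpectralExpander W B (99 / 100)) ⟨by simp [edgeWeight], by linarith⟩ ?_).imp
    fun B ⟨hBA, ⟨_, hBμ⟩, hB⟩ => ⟨hBA, by linarith, hB⟩
  rintro B hBA ⟨hcut, hmass⟩ hB
  obtain ⟨C, hCB, hC, hCμ, hCcut⟩ := exists_sparse_cut_of_not_isSpectralExpander hW hWs (hpsd B)
    hμ (ε := 1 / 5) (by norm_num) (by norm_num) hB
  have hcut' := edgeWeight_sdiff_sdiff_le hW (by norm_num) hBA hCB hcut hCcut.le
  refine ⟨B \ C, sdiff_ssubset hCB hC, hcut', ?_⟩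
  by_contra! hlost
  set r := ∑ v ∈ A \ (B \ C), μ v
  set b := ∑ v ∈ B \ C, μ v
  have hrb : r + b = ∑ v ∈ A, μ v := sum_sdiff (sdiff_subset.trans hBA)
  have hbC : b + ∑ v ∈ C, μ v = ∑ v ∈ B, μ v := sum_sdiff hCB
  have hαβ : α ≤ β / 10 := by nlinarith
  have hlower := hlow (A \ (B \ C)) (B \ C) (by linarith) (by linarith)
  have hupper := hup (A \ (B \ C))
  have := fifth_mul_add_lt_mixing_bound (r := r) (b := b) hβ hA hA1 hα hδ (by linarith)
    (by linarith)
  linarith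

end WeightedGraph

section Sampler

variable {ι : Type*} [Fintype ι]

noncomputable def deviationMass (p a : ι → ℝ) (m α : ℝ) : ℝ :=
  ∑ i ∈ univ.filter (fun i => α < |a i - m|), p i

theorem mul_le_sum_mul_of_deviationMass_le {p a b : ι → ℝ} {ma mb α δ : ℝ}
    (hp : ∀ i, 0 ≤ p i) (hp1 : ∑ i, p i = 1) (ha : ∀ i, 0 ≤ a i) (hb : ∀ i, 0 ≤ b i)
    (hma : α ≤ ma) (hmb : α ≤ mb) (hda : deviationMass p a ma α ≤ δ)
    (hdb : deviationMass p b mb α ≤ δ) :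
    (1 - 2 * δ) * ((ma - α) * (mb - α)) ≤ ∑ i, p i * (a i * b i) := by
  set K := (ma - α) * (mb - α)
  have hK : 0 ≤ K := mul_nonneg (sub_nonneg.2 hma) (sub_nonneg.2 hmb)
  have key : ∀ i, p i * K ≤ p i * (a i * b i) +
      K * ((if α < |a i - ma| then p i else 0) + if α < |b i - mb| then p i else 0) := by
    intro i
    have hab : 0 ≤ p i * (a i * b i) := mul_nonneg (hp i) (mul_nonneg (ha i) (hb i))
    split_ifs with h₁ h₂ h₂
    · nlinarith [mul_nonneg hK (hp i)]
    · nlinarith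
    · nlinarith
    · have := (abs_le.1 (not_lt.1 h₁)).1
      have := (abs_le.1 (not_lt.1 h₂)).1
      have := mul_le_mul (by linarith : ma - α ≤ a i) (by linarith : mb - α ≤ b i)
        (sub_nonneg.2 hmb) (ha i)
      nlinarith [hp i]
  have hsum : K ≤
      ∑ i, p i * (a i * b i) + K * (deviationMass p a ma α + deviationMass p b mb α) :=
    calc K = ∑ i, p i * K := by rw [← sum_mul, hp1, one_mul]
      _ ≤ _ := sum_le_sum fun i _ => key i
      _ = _ := by simp only [deviationMass, sum_filter, sum_add_distrib, mul_add, mul_sum]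
  nlinarith [mul_le_mul_of_nonneg_left (add_le_add hda hdb) hK]

theorem sum_mul_le_of_deviationMass_le {p a b : ι → ℝ} {mb α δ : ℝ} (hp : ∀ i, 0 ≤ p i)
    (ha : ∀ i, 0 ≤ a i) (ha1 : ∀ i, a i ≤ 1) (hb1 : ∀ i, b i ≤ 1) (hmb : 0 ≤ mb + α)
    (hdb : deviationMass p b mb α ≤ δ) :
    ∑ i, p i * (a i * b i) ≤ (mb + α) * ∑ i, p i * a i + δ := by
  have key : ∀ i, p i * (a i * b i) ≤
      (mb + α) * (p i * a i) + if α < |b i - mb| then p i else 0 := by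
    intro i
    split_ifs with h
    · have hab : a i * b i ≤ 1 := (mul_le_of_le_one_right (ha i) (hb1 i)).trans (ha1 i)
      nlinarith [hp i, mul_nonneg (hp i) (mul_nonneg hmb (ha i))]
    · have := (abs_le.1 (not_lt.1 h)).2
      nlinarith [mul_nonneg (hp i) (ha i)]
  calc ∑ i, p i * (a i * b i)
        ≤ ∑ i, ((mb + α) * (p i * a i) + if α < |b i - mb| then p i else 0) :=
          sum_le_sum fun i _ => key i
    _ = (mb + α) * ∑ i, p i * a i + deviationMass p b mb α := by
        simp only [deviationMass, sum_filter, sum_add_distrib, mul_sum]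
    _ ≤ _ := by linarith

end Sampler

section TwoStepWalk

variable {V₁ V₂ : Type*} [Fintype V₁] {P1 : V₁ → ℝ} {c : V₁ → V₂ → ℝ} {W : V₂ → V₂ → ℝ}

theorem sum_sum_mul_eq_sum_mul_mul (hW : ∀ u v, W u v = ∑ S, P1 S * c S u * c S v)
    (C D : Finset V₂) (x y : V₂ → ℝ) :
    ∑ u ∈ C, ∑ v ∈ D, W u v * (x u * y v) =
      ∑ S, P1 S * ((∑ u ∈ C, c S u * x u) * ∑ v ∈ D, c S v * y v) := by
  calc ∑ u ∈ C, ∑ v ∈ D, W u v * (x u * y v)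
      = ∑ u ∈ C, ∑ S, ∑ v ∈ D, P1 S * (c S u * x u * (c S v * y v)) :=
        sum_congr rfl fun u _ => by
          rw [sum_comm]
          refine sum_congr rfl fun v _ => ?_
          rw [hW, sum_mul]
          exact sum_congr rfl fun S _ => by ring
    _ = ∑ S, ∑ u ∈ C, ∑ v ∈ D, P1 S * (c S u * x u * (c S v * y v)) := sum_comm
    _ = _ := sum_congr rfl fun S _ => by simp_rw [sum_mul_sum, mul_sum]

theorem quadForm_nonneg_of_eq_sum (hP1 : ∀ S, 0 ≤ P1 S)
    (hW : ∀ u v, W u v = ∑ S, P1 S * c S u * c S v) (B : Finset V₂) (x : V₂ → ℝ) :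
    0 ≤ quadForm W B x x := by
  rw [quadForm, sum_sum_mul_eq_sum_mul_mul hW]
  exact sum_nonneg fun S _ => mul_nonneg (hP1 S) (mul_self_nonneg _)

theorem edgeWeight_eq_sum_mul_mul (hW : ∀ u v, W u v = ∑ S, P1 S * c S u * c S v)
    (C D : Finset V₂) :
    edgeWeight W C D = ∑ S, P1 S * ((∑ u ∈ C, c S u) * ∑ v ∈ D, c S v) := by
  simpa [edgeWeight] using sum_sum_mul_eq_sum_mul_mul hW C D 1 1

theorem sum_eq_sum_mul_sum {P2 : V₂ → ℝ} (hP2 : ∀ T, P2 T = ∑ S, P1 S * c S T)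
    (C : Finset V₂) :
    ∑ T ∈ C, P2 T = ∑ S, P1 S * ∑ T ∈ C, c S T := by
  simp only [hP2, mul_sum]
  exact sum_comm

theorem deviationMass_le_of_sampler [Fintype V₂] {P2 : V₂ → ℝ} {α δ : ℝ}
    (hsampler : ∀ f : V₂ → ℝ, (∀ T, f T ∈ Set.Icc (0 : ℝ) 1) →
      deviationMass P1 (fun S => ∑ T, c S T * f T) (∑ T, P2 T * f T) α ≤ δ)
    (C : Finset V₂) : deviationMass P1 (fun S => ∑ T ∈ C, c S T) (∑ T ∈ C, P2 T) α ≤ δ := by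
  classical
  simpa [Finset.sum_ite_mem] using
    hsampler (fun T => if T ∈ C then 1 else 0) fun T => by split_ifs <;> simp

end TwoStepWalk

theorem stmt10_general {V1 V2 : Type*} [Fintype V1] [Fintype V2]
    (P1 : V1 → ℝ) (hP1 : ∀ S, 0 ≤ P1 S) (hP1s : ∑ S, P1 S = 1)
    (c : V1 → V2 → ℝ) (hc : ∀ S T, 0 ≤ c S T) (hcs : ∀ S, ∑ T, c S T = 1)
    (P2 : V2 → ℝ) (hP2 : ∀ T, P2 T = ∑ S, P1 S * c S T)
    -- edge weights of the two-step walk graph G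
    (W : V2 → V2 → ℝ) (hWdef : ∀ T1 T2, W T1 T2 = ∑ S, P1 S * c S T1 * c S T2)
    (α β δ : ℝ) (hα : 0 < α) (hβ : 0 < β)
    (hαβ : α < β ^ 2 / 100) (hδβ : δ < β ^ 2 / 100)
    (hsampler : ∀ f : V2 → ℝ, (∀ T, f T ∈ Set.Icc (0 : ℝ) 1) →
      ∑ S ∈ univ.filter (fun S =>
        α < |(∑ T, c S T * f T) - ∑ T, P2 T * f T|), P1 S ≤ δ)
    (A : Finset V2) (hA : β ≤ ∑ T ∈ A, P2 T) :
    ∃ B ⊆ A, β / 4 ≤ ∑ T ∈ B, P2 T ∧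
      -- λ of the induced graph G_B is at most 99/100:
      ∀ f : V2 → ℝ, (∑ v ∈ B, (∑ u ∈ B, W v u) * f v = 0) →
        ∑ v ∈ B, (∑ u ∈ B, W v u) * ((∑ u ∈ B, W v u * f u) / (∑ u ∈ B, W v u)) ^ 2
          ≤ (99 / 100 : ℝ) ^ 2 * ∑ v ∈ B, (∑ u ∈ B, W v u) * (f v) ^ 2 := by
  classical
  have hW0 : ∀ u v, 0 ≤ W u v := fun u v => hWdef u v ▸
    sum_nonneg fun S _ => mul_nonneg (mul_nonneg (hP1 S) (hc S u)) (hc S v)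
  have hWs : ∀ u v, W u v = W v u := fun u v => by simp only [hWdef, mul_right_comm]
  have hcC : ∀ S (C : Finset V2), 0 ≤ ∑ T ∈ C, c S T := fun S C => sum_nonneg fun T _ => hc S T
  have hcC1 : ∀ S (C : Finset V2), ∑ T ∈ C, c S T ≤ 1 := fun S C =>
    hcs S ▸ sum_le_sum_of_subset_of_nonneg (subset_univ C) fun T _ _ => hc S T
  have hμ := sum_eq_sum_mul_sum hP2
  have hdev := deviationMass_le_of_sampler hsampler
  have hA1 : ∑ T ∈ A, P2 T ≤ 1 := by
    rw [hμ, ← hP1s]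
    exact sum_le_sum fun S _ => mul_le_of_le_one_right (hP1 S) (hcC1 S A)
  refine exists_large_isSpectralExpander_of_mixing hW0 hWs (quadForm_nonneg_of_eq_sum hP1 hWdef)
    (fun T => hP2 T ▸ sum_nonneg fun S _ => mul_nonneg (hP1 S) (hc S T)) hβ hA hA1 hαβ hδβ
    (fun C D hC hD => ?_) fun C => ?_
  · rw [edgeWeight_eq_sum_mul_mul hWdef]
    exact mul_le_sum_mul_of_deviationMass_le hP1 hP1s (hcC · C) (hcC · D) hC hD (hdev C) (hdev D)
  · rw [edgeWeight_eq_sum_mul_mul hWdef, hμ C]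
    exact sum_mul_le_of_deviationMass_le hP1 (hcC · C) (hcC1 · C) (hcC1 · A)
      (by linarith [hμ A ▸ hA]) (hdev A)

/-- Every large induced subgraph of the two-step walk of a sampler contains a large
induced expander: if (G_samp, W) is an (α,δ)-sampler with α, δ < β²/100 and A ⊆ V2
has μ_G(A) ≥ β, there is B ⊆ A with μ_G(B) ≥ β/4 and λ(G_B) ≤ 99/100. -/
theorem stmt10 {V1 V2 : Type*} [Fintype V1] [Fintype V2] [DecidableEq V2]
    (P1 : V1 → ℝ) (hP1 : ∀ S, 0 ≤ P1 S) (hP1s : ∑ S, P1 S = 1)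
    (c : V1 → V2 → ℝ) (hc : ∀ S T, 0 ≤ c S T) (hcs : ∀ S, ∑ T, c S T = 1)
    (P2 : V2 → ℝ) (hP2 : ∀ T, P2 T = ∑ S, P1 S * c S T)
    -- edge weights of the two-step walk graph G
    (W : V2 → V2 → ℝ) (hWdef : ∀ T1 T2, W T1 T2 = ∑ S, P1 S * c S T1 * c S T2)
    (α β δ : ℝ) (hα : 0 < α) (hβ : 0 < β) (hδ : 0 < δ)
    (hα1 : α < 1) (hβ1 : β < 1) (hδ1 : δ < 1)
    (hαβ : α < β ^ 2 / 100) (hδβ : δ < β ^ 2 / 100)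
    (hsampler : ∀ f : V2 → ℝ, (∀ T, f T ∈ Set.Icc (0 : ℝ) 1) →
      ∑ S ∈ univ.filter (fun S =>
        α < |(∑ T, c S T * f T) - ∑ T, P2 T * f T|), P1 S ≤ δ)
    (A : Finset V2) (hA : β ≤ ∑ T ∈ A, P2 T) :
    ∃ B ⊆ A, β / 4 ≤ ∑ T ∈ B, P2 T ∧
      -- λ of the induced graph G_B is at most 99/100:
      ∀ f : V2 → ℝ, (∑ v ∈ B, (∑ u ∈ B, W v u) * f v = 0) →
        ∑ v ∈ B, (∑ u ∈ B, W v u) * ((∑ u ∈ B, W v u * f u) / (∑ u ∈ B, W v u)) ^ 2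
          ≤ (99 / 100 : ℝ) ^ 2 * ∑ v ∈ B, (∑ u ∈ B, W v u) * (f v) ^ 2 :=
  stmt10_general P1 hP1 hP1s c hc hcs P2 hP2 W hWdef α β δ hα hβ hαβ hδβ hsampler A hA
end
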